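/- arXiv:1510.06298 — 4 statements merged into one kernel-verified Lean document; each statement's English description precedes it below -/
import Mathlib

section
/- Let D = {a,b,c} and let s : D² → D be the idempotent semilattice-without-unit operation mapping every pair (x,y) with x ≠ y to c and (x,x) to x. If a relation ρ ⊆ D^n (n ≥ 2) has an essential tuple of the form (c,c,x_3,…,x_n), then ρ is not preserved by s. -/
/-! Let `u` and `v` be the tuples in `ρ` obtained from the essential tuple `x` by changing
its first and its second entry. Since `c` is absorbing for `s`, the entries of `s u v` in
these two positions are `c`, and elsewhere `s` acts idempotently on equal entries; hence
`s u v = x ∉ ρ`. -/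

open Function

section Absorbing

variable {D : Type*} {s : D → D → D} {c : D}

theorem left_absorbing_of_eq_of_ne (hs1 : ∀ x, s x x = x) (hs2 : ∀ x y, x ≠ y → s x y = c)
    (d : D) : s c d = c := by
  rcases eq_or_ne c d with rfl | h
  exacts [hs1 c, hs2 c d h]

theorem right_absorbing_of_eq_of_ne (hs1 : ∀ x, s x x = x) (hs2 : ∀ x y, x ≠ y → s x y = c)
    (d : D) : s d c = c := by
  rcases eq_or_ne d c with rfl | h
  exacts [hs1 d, hs2 d c h]

end Absorbing

theorem map₂_update_update_eq {ι D : Type*} [DecidableEq ι] {s : D → D → D} {x : ι → D}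
    {i j : ι} (hij : i ≠ j) (hs : ∀ d, s d d = d) (hi : ∀ d, s d (x i) = x i)
    (hj : ∀ d, s (x j) d = x j) (d e : D) :
    (fun k => s (update x i d k) (update x j e k)) = x := by
  funext k
  rcases eq_or_ne k i with rfl | hki
  · rw [update_self, update_of_ne hij, hi]
  rcases eq_or_ne k j with rfl | hkj
  · rw [update_self, update_of_ne hki, hj]
  · rw [update_of_ne hki, update_of_ne hkj, hs]

theorem not_preserves_of_update_update {ι D : Type*} [DecidableEq ι] {s : D → D → D}
    {ρ : (ι → D) → Prop} {x : ι → D} {i j : ι} (hij : i ≠ j) (hs : ∀ d, s d d = d)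
    (hi : ∀ d, s d (x i) = x i) (hj : ∀ d, s (x j) d = x j) (hxρ : ¬ ρ x) {d e : D}
    (hd : ρ (update x i d)) (he : ρ (update x j e)) :
    ¬ ∀ u v : ι → D, ρ u → ρ v → ρ (fun k => s (u k) (v k)) := fun hpres =>
  hxρ (map₂_update_update_eq hij hs hi hj d e ▸ hpres _ _ hd he)

/-- if ρ has an essential tuple of the form (c,c,x₃,…,xₙ) then ρ
is not preserved by the semilattice operation s. -/
theorem essential_cc_not_preserved {D : Type*} (c : D)
    (s : D → D → D) (hs1 : ∀ x, s x x = x) (hs2 : ∀ x y, x ≠ y → s x y = c)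
    {n : ℕ} (hn : 2 ≤ n) (ρ : (Fin n → D) → Prop)
    (x : Fin n → D) (hx0 : x ⟨0, by omega⟩ = c) (hx1 : x ⟨1, by omega⟩ = c)
    (hxρ : ¬ ρ x) (hess : ∀ i : Fin n, ∃ d : D, ρ (Function.update x i d)) :
    ¬ ∀ u v : Fin n → D, ρ u → ρ v → ρ (fun i => s (u i) (v i)) := by
  obtain ⟨d, hd⟩ := hess ⟨0, by omega⟩
  obtain ⟨e, he⟩ := hess ⟨1, by omega⟩
  refine not_preserves_of_update_update (by simp [Fin.ext_iff]) hs1 (fun y => ?_) (fun y => ?_)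
    hxρ hd he
  · rw [hx0, right_absorbing_of_eq_of_ne hs1 hs2]
  · rw [hx1, left_absorbing_of_eq_of_ne hs1 hs2]
end

section
/- Let D = {a,b,c}, let s be the binary operation with s(x,x)=x and s(x,y)=c for x≠y, and let t be the 4-ary idempotent operation on D mapping (a,b,a,b)↦b, (a,b,b,a)↦a, (c,b,b,c)↦b, (a,c,a,c)↦a, (x,x,x,x)↦x, and all other tuples to c. Then every m-ary term operation g of the algebra (D; s, t) has a coordinate i such that g(x_1,…,x_m) ∈ {a,c} whenever x_i ∈ {a,c}, and a coordinate j such that g(x_1,…,x_m) ∈ {b,c} whenever x_j ∈ {b,c}. -/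
/-!
Call an operation `f` projective for a set `S` if some coordinate `i` forces the value into `S`:
`x i ∈ S → f x ∈ S`. Such operations contain the projections and are closed under composition
(follow the forcing coordinate of the outer operation into the corresponding inner one), so it
suffices to check the basic operations. For `S = {a, c}` and `S = {b, c}`, `s` is forced by its first
coordinate, because off the diagonal it takes the value `c ∈ S`. The operation `t` is forced into
`{a, c}` by its second coordinate, since apart from the diagonal the only tuple with second entry in
`{a, c}` and value other than `c` is `(a, c, a, c) ↦ a`; symmetrically, `t` is forced into `{b, c}`
by its first coordinate, through `(c, b, b, c) ↦ b`.
-/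

/-- Term operations of the algebra (D; s, t): generated from projections by
composition with s and t. -/
inductive IsTerm {D : Type*} (s : D → D → D) (t : D → D → D → D → D) :
    {m : ℕ} → ((Fin m → D) → D) → Prop
  | proj {m : ℕ} (i : Fin m) : IsTerm s t (fun x => x i)
  | comp_s {m : ℕ} {f g : (Fin m → D) → D} :
      IsTerm s t f → IsTerm s t g → IsTerm s t (fun x => s (f x) (g x))
  | comp_t {m : ℕ} {f1 f2 f3 f4 : (Fin m → D) → D} :
      IsTerm s t f1 → IsTerm s t f2 → IsTerm s t f3 → IsTerm s t f4 →
      IsTerm s t (fun x => t (f1 x) (f2 x) (f3 x) (f4 x))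

def IsSetProjective {D : Type*} (S : Set D) {n : ℕ} (f : (Fin n → D) → D) : Prop :=
  ∃ i : Fin n, ∀ x : Fin n → D, x i ∈ S → f x ∈ S

namespace IsSetProjective

variable {D : Type*} {S : Set D} {n k : ℕ}

theorem proj (i : Fin n) : IsSetProjective S (fun x : Fin n → D => x i) :=
  ⟨i, fun _ hx => hx⟩

theorem comp {op : (Fin k → D) → D} {f : Fin k → (Fin n → D) → D}
    (hop : IsSetProjective S op) (hf : ∀ j, IsSetProjective S (f j)) :
    IsSetProjective S (fun x => op (fun j => f j x)) := by
  obtain ⟨j, hj⟩ := hop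
  obtain ⟨i, hi⟩ := hf j
  exact ⟨i, fun x hx => hj _ (hi x hx)⟩

theorem of_idem_of_ne {s : D → D → D} {c : D} (hs1 : ∀ x, s x x = x)
    (hs2 : ∀ x y, x ≠ y → s x y = c) (hc : c ∈ S) :
    IsSetProjective S (fun v : Fin 2 → D => s (v 0) (v 1)) := by
  refine ⟨0, fun v hv => ?_⟩
  by_cases h : v 0 = v 1
  · simpa only [h, hs1] using hv
  · simpa only [hs2 _ _ h] using hc

end IsSetProjective

theorem IsTerm.isSetProjective {D : Type*} {S : Set D} {s : D → D → D}
    {t : D → D → D → D → D}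
    (hs : IsSetProjective S (fun v : Fin 2 → D => s (v 0) (v 1)))
    (ht : IsSetProjective S (fun v : Fin 4 → D => t (v 0) (v 1) (v 2) (v 3)))
    {m : ℕ} {g : (Fin m → D) → D} (hg : IsTerm s t g) : IsSetProjective S g := by
  induction hg with
  | proj i => exact IsSetProjective.proj i
  | @comp_s f g _ _ ihf ihg =>
    exact hs.comp (f := ![f, g]) fun j => by fin_cases j <;> assumption
  | @comp_t f1 f2 f3 f4 _ _ _ _ ih1 ih2 ih3 ih4 =>
    exact ht.comp (f := ![f1, f2, f3, f4]) fun j => by fin_cases j <;> assumption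

section BasicOperationT

variable {D : Type*} {a b c : D} {t : D → D → D → D → D}

theorem isSetProjective_t_ac (hab : a ≠ b) (hbc : b ≠ c) (ht0 : ∀ x, t x x x x = x)
    (ht4 : t a c a c = a)
    (ht5 : ∀ w x y z : D, ¬ (w = x ∧ x = y ∧ y = z) →
      ¬ (w = a ∧ x = b ∧ y = a ∧ z = b) → ¬ (w = a ∧ x = b ∧ y = b ∧ z = a) →
      ¬ (w = c ∧ x = b ∧ y = b ∧ z = c) → ¬ (w = a ∧ x = c ∧ y = a ∧ z = c) →
      t w x y z = c) :
    IsSetProjective {a, c} (fun v : Fin 4 → D => t (v 0) (v 1) (v 2) (v 3)) := by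
  refine ⟨1, fun v hv => ?_⟩
  beta_reduce
  have hb : v 1 ≠ b := by rintro h; rw [h] at hv; exact hv.elim hab.symm hbc
  by_cases hdiag : v 0 = v 1 ∧ v 1 = v 2 ∧ v 2 = v 3
  · obtain ⟨h01, h12, h23⟩ := hdiag
    rwa [h01, h12, h23, ht0, ← h23, ← h12]
  by_cases hacac : v 0 = a ∧ v 1 = c ∧ v 2 = a ∧ v 3 = c
  · obtain ⟨h0, h1, h2, h3⟩ := hacac
    simp only [h0, h1, h2, h3, ht4, Set.mem_insert_iff, true_or]
  right
  exact ht5 _ _ _ _ hdiag (fun h => hb h.2.1) (fun h => hb h.2.1) (fun h => hb h.2.1) hacac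

theorem isSetProjective_t_bc (hab : a ≠ b) (hac : a ≠ c) (ht0 : ∀ x, t x x x x = x)
    (ht3 : t c b b c = b)
    (ht5 : ∀ w x y z : D, ¬ (w = x ∧ x = y ∧ y = z) →
      ¬ (w = a ∧ x = b ∧ y = a ∧ z = b) → ¬ (w = a ∧ x = b ∧ y = b ∧ z = a) →
      ¬ (w = c ∧ x = b ∧ y = b ∧ z = c) → ¬ (w = a ∧ x = c ∧ y = a ∧ z = c) →
      t w x y z = c) :
    IsSetProjective {b, c} (fun v : Fin 4 → D => t (v 0) (v 1) (v 2) (v 3)) := by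
  refine ⟨0, fun v hv => ?_⟩
  beta_reduce
  have ha : v 0 ≠ a := by rintro h; rw [h] at hv; exact hv.elim hab hac
  by_cases hdiag : v 0 = v 1 ∧ v 1 = v 2 ∧ v 2 = v 3
  · obtain ⟨h01, h12, h23⟩ := hdiag
    rwa [h01, h12, h23, ht0, ← h23, ← h12, ← h01]
  by_cases hcbbc : v 0 = c ∧ v 1 = b ∧ v 2 = b ∧ v 3 = c
  · obtain ⟨h0, h1, h2, h3⟩ := hcbbc
    simp only [h0, h1, h2, h3, ht3, Set.mem_insert_iff, true_or]
  right
  exact ht5 _ _ _ _ hdiag (fun h => ha h.1) (fun h => ha h.1) hcbbc (fun h => ha h.1)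

end BasicOperationT

theorem term_ops_projective_general {D : Type*} (a b c : D)
    (hab : a ≠ b) (hac : a ≠ c) (hbc : b ≠ c)
    (s : D → D → D) (hs1 : ∀ x, s x x = x) (hs2 : ∀ x y, x ≠ y → s x y = c)
    (t : D → D → D → D → D)
    (ht0 : ∀ x, t x x x x = x)
    (ht3 : t c b b c = b) (ht4 : t a c a c = a)
    (ht5 : ∀ w x y z : D, ¬ (w = x ∧ x = y ∧ y = z) →
      ¬ (w = a ∧ x = b ∧ y = a ∧ z = b) → ¬ (w = a ∧ x = b ∧ y = b ∧ z = a) →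
      ¬ (w = c ∧ x = b ∧ y = b ∧ z = c) → ¬ (w = a ∧ x = c ∧ y = a ∧ z = c) →
      t w x y z = c)
    {m : ℕ} (g : (Fin m → D) → D) (hg : IsTerm s t g) :
    (∃ i : Fin m, ∀ x : Fin m → D, (x i = a ∨ x i = c) → (g x = a ∨ g x = c)) ∧
    (∃ j : Fin m, ∀ x : Fin m → D, (x j = b ∨ x j = c) → (g x = b ∨ g x = c)) :=
  ⟨hg.isSetProjective (.of_idem_of_ne hs1 hs2 (Or.inr rfl))
      (isSetProjective_t_ac hab hbc ht0 ht4 ht5),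
    hg.isSetProjective (.of_idem_of_ne hs1 hs2 (Or.inr rfl))
      (isSetProjective_t_bc hab hac ht0 ht3 ht5)⟩

/-- every term operation of (D; s, t) is {a,c}{b,c}-projective,
with possibly different witnessing coordinates for the two halves. -/
theorem term_ops_projective {D : Type*} (a b c : D)
    (hab : a ≠ b) (hac : a ≠ c) (hbc : b ≠ c)
    (hD : ∀ x : D, x = a ∨ x = b ∨ x = c)
    (s : D → D → D) (hs1 : ∀ x, s x x = x) (hs2 : ∀ x y, x ≠ y → s x y = c)
    (t : D → D → D → D → D)
    (ht0 : ∀ x, t x x x x = x)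
    (ht1 : t a b a b = b) (ht2 : t a b b a = a)
    (ht3 : t c b b c = b) (ht4 : t a c a c = a)
    (ht5 : ∀ w x y z : D, ¬ (w = x ∧ x = y ∧ y = z) →
      ¬ (w = a ∧ x = b ∧ y = a ∧ z = b) → ¬ (w = a ∧ x = b ∧ y = b ∧ z = a) →
      ¬ (w = c ∧ x = b ∧ y = b ∧ z = c) → ¬ (w = a ∧ x = c ∧ y = a ∧ z = c) →
      t w x y z = c)
    {m : ℕ} (g : (Fin m → D) → D) (hg : IsTerm s t g) :
    (∃ i : Fin m, ∀ x : Fin m → D, (x i = a ∨ x i = c) → (g x = a ∨ g x = c)) ∧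
    (∃ j : Fin m, ∀ x : Fin m → D, (x j = b ∨ x j = c) → (g x = b ∨ g x = c)) :=
  term_ops_projective_general a b c hab hac hbc s hs1 hs2 t ht0 ht3 ht4 ht5 g hg
end

section
/- Let D = {a,b,c}, s the binary operation with s(x,x)=x and s(x,y)=c for x≠y, and t the 4-ary idempotent operation mapping (a,b,a,b)↦b, (a,b,b,a)↦a, (c,b,b,c)↦b, (a,c,a,c)↦a, diagonal tuples to their value, and all other tuples to c. Then every m-ary term operation g of (D; s, t) has a coordinate i such that g(x_1,…,x_m) = c whenever x_i = c. -/
/-!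
The element `c` is absorbing for `s` in its first argument and for `t` in its third
argument. A term `s f g` or `t f₁ f₂ f₃ f₄` therefore inherits a `c`-absorbing coordinate
from `f` resp. `f₃`, and induction on terms starting from the projections gives one for
every term operation.
-/

theorem IsTerm.exists_coord_forcing {D : Type*} {s : D → D → D} {t : D → D → D → D → D}
    {c : D} (hs : ∀ v, s c v = c) (ht : ∀ u v w, t u v c w = c)
    {m : ℕ} {g : (Fin m → D) → D} (hg : IsTerm s t g) :
    ∃ i : Fin m, ∀ x : Fin m → D, x i = c → g x = c := by
  induction hg with
  | proj i => exact ⟨i, fun _ hx => hx⟩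
  | comp_s _ _ ihf _ =>
    obtain ⟨i, hi⟩ := ihf
    exact ⟨i, fun x hx => by simp only [hi x hx, hs]⟩
  | comp_t _ _ _ _ _ _ ih₃ _ =>
    obtain ⟨i, hi⟩ := ih₃
    exact ⟨i, fun x hx => by simp only [hi x hx, ht]⟩

theorem left_absorbing_of_idempotent_of_ne {D : Type*} {s : D → D → D} {c : D}
    (hs1 : ∀ x, s x x = x) (hs2 : ∀ x y, x ≠ y → s x y = c) (v : D) : s c v = c := by
  rcases eq_or_ne c v with rfl | h
  · exact hs1 c
  · exact hs2 c v h

theorem term_ops_c_coordinate_general {D : Type*} (a b c : D)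
    (hac : a ≠ c) (hbc : b ≠ c)
    (s : D → D → D) (hs1 : ∀ x, s x x = x) (hs2 : ∀ x y, x ≠ y → s x y = c)
    (t : D → D → D → D → D)
    (ht0 : ∀ x, t x x x x = x)
    (ht5 : ∀ w x y z : D, ¬ (w = x ∧ x = y ∧ y = z) →
      ¬ (w = a ∧ x = b ∧ y = a ∧ z = b) → ¬ (w = a ∧ x = b ∧ y = b ∧ z = a) →
      ¬ (w = c ∧ x = b ∧ y = b ∧ z = c) → ¬ (w = a ∧ x = c ∧ y = a ∧ z = c) →
      t w x y z = c)
    {m : ℕ} (g : (Fin m → D) → D) (hg : IsTerm s t g) :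
    ∃ i : Fin m, ∀ x : Fin m → D, x i = c → g x = c := by
  -- the four exceptional tuples of `t` have third entry `a` or `b`
  have ht : ∀ u v w, t u v c w = c := by
    intro u v w
    by_cases hdiag : u = c ∧ v = c ∧ w = c
    · obtain ⟨rfl, rfl, rfl⟩ := hdiag
      exact ht0 _
    · refine ht5 u v c w ?_ (fun h => hac h.2.2.1.symm) (fun h => hbc h.2.2.1.symm)
        (fun h => hbc h.2.2.1.symm) (fun h => hac h.2.2.1.symm)
      rintro ⟨huv, hvc, hcw⟩
      exact hdiag ⟨huv.trans hvc, hvc, hcw.symm⟩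
  exact hg.exists_coord_forcing (left_absorbing_of_idempotent_of_ne hs1 hs2) ht

/-- every term operation of (D; s, t) has a coordinate i such that
g(x) = c whenever x_i = c. -/
theorem term_ops_c_coordinate {D : Type*} (a b c : D)
    (hab : a ≠ b) (hac : a ≠ c) (hbc : b ≠ c)
    (hD : ∀ x : D, x = a ∨ x = b ∨ x = c)
    (s : D → D → D) (hs1 : ∀ x, s x x = x) (hs2 : ∀ x y, x ≠ y → s x y = c)
    (t : D → D → D → D → D)
    (ht0 : ∀ x, t x x x x = x)
    (ht1 : t a b a b = b) (ht2 : t a b b a = a)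
    (ht3 : t c b b c = b) (ht4 : t a c a c = a)
    (ht5 : ∀ w x y z : D, ¬ (w = x ∧ x = y ∧ y = z) →
      ¬ (w = a ∧ x = b ∧ y = a ∧ z = b) → ¬ (w = a ∧ x = b ∧ y = b ∧ z = a) →
      ¬ (w = c ∧ x = b ∧ y = b ∧ z = c) → ¬ (w = a ∧ x = c ∧ y = a ∧ z = c) →
      t w x y z = c)
    {m : ℕ} (g : (Fin m → D) → D) (hg : IsTerm s t g) :
    ∃ i : Fin m, ∀ x : Fin m → D, x i = c → g x = c :=
  term_ops_c_coordinate_general a b c hac hbc s hs1 hs2 t ht0 ht5 g hg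
end

section
/- Let D = {a,b,c} and let r be Chen's 4-ary idempotent operation: r(a,b,b,b)=b, r(b,a,b,b)=b, r(a,a,a,b)=a, r(a,a,b,a)=a, r(x,x,x,x)=x, and r equals c on all other tuples. Then r is not {a,c}{b,c}-projective on the set of its listed tuples: for every coordinate i ∈ {1,2,3,4} there exists a tuple (x_1,x_2,x_3,x_4) ∈ {a,b}⁴ with x_i ∈ {a,c} but r(x_1,x_2,x_3,x_4) ∉ {a,c}, or x_i ∈ {b,c} but r(x_1,x_2,x_3,x_4) ∉ {b,c}. -/
/-! Every coordinate is defeated by one of the four listed tuples over `{a, b}`: its entry there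
is `a` while `r` returns `b`, or `b` while `r` returns `a`, and by distinctness
`b ∉ {a, c}`, `a ∉ {b, c}`. -/

section

variable {D : Type*}

/-- A coordinate value `y` and output `v` witnessing that `{a, c}` or `{b, c}` is not preserved
along that coordinate. -/
def BreaksACBC (a b c y v : D) : Prop :=
  ((y = a ∨ y = c) ∧ ¬ (v = a ∨ v = c)) ∨ ((y = b ∨ y = c) ∧ ¬ (v = b ∨ v = c))

variable {a b c : D}

lemma breaksACBC_a_b (hab : a ≠ b) (hbc : b ≠ c) : BreaksACBC a b c a b :=
  Or.inl ⟨Or.inl rfl, by rintro (h | h); exacts [hab h.symm, hbc h]⟩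

lemma breaksACBC_b_a (hab : a ≠ b) (hac : a ≠ c) : BreaksACBC a b c b a :=
  Or.inr ⟨Or.inl rfl, by rintro (h | h); exacts [hab h, hac h]⟩

end

theorem chen_r_not_projective_general {D : Type*} (a b c : D)
    (hab : a ≠ b) (hac : a ≠ c) (hbc : b ≠ c)
    (r : D → D → D → D → D)
    (hr1 : r a b b b = b) (hr2 : r b a b b = b)
    (hr3 : r a a a b = a) (hr4 : r a a b a = a) :
    ∀ i : Fin 4, ∃ x : Fin 4 → D, (∀ j : Fin 4, x j = a ∨ x j = b) ∧
      (((x i = a ∨ x i = c) ∧ ¬ (r (x 0) (x 1) (x 2) (x 3) = a ∨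
          r (x 0) (x 1) (x 2) (x 3) = c)) ∨
       ((x i = b ∨ x i = c) ∧ ¬ (r (x 0) (x 1) (x 2) (x 3) = b ∨
          r (x 0) (x 1) (x 2) (x 3) = c))) := by
  intro i
  fin_cases i
  · refine ⟨![a, b, b, b], by simp [Fin.forall_fin_succ], ?_⟩
    show BreaksACBC a b c a (r a b b b)
    rw [hr1]
    exact breaksACBC_a_b hab hbc
  · refine ⟨![b, a, b, b], by simp [Fin.forall_fin_succ], ?_⟩
    show BreaksACBC a b c a (r b a b b)
    rw [hr2]
    exact breaksACBC_a_b hab hbc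
  · refine ⟨![a, a, b, a], by simp [Fin.forall_fin_succ], ?_⟩
    show BreaksACBC a b c b (r a a b a)
    rw [hr4]
    exact breaksACBC_b_a hab hac
  · refine ⟨![a, a, a, b], by simp [Fin.forall_fin_succ], ?_⟩
    show BreaksACBC a b c b (r a a a b)
    rw [hr3]
    exact breaksACBC_b_a hab hac

/-- Chen's operation r is not {a,c}{b,c}-projective at any
coordinate, witnessed by tuples over {a,b}. -/
theorem chen_r_not_projective {D : Type*} (a b c : D)
    (hab : a ≠ b) (hac : a ≠ c) (hbc : b ≠ c)
    (hD : ∀ x : D, x = a ∨ x = b ∨ x = c)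
    (r : D → D → D → D → D)
    (hr0 : ∀ x, r x x x x = x)
    (hr1 : r a b b b = b) (hr2 : r b a b b = b)
    (hr3 : r a a a b = a) (hr4 : r a a b a = a)
    (hr5 : ∀ w x y z : D, ¬ (w = x ∧ x = y ∧ y = z) →
      ¬ (w = a ∧ x = b ∧ y = b ∧ z = b) → ¬ (w = b ∧ x = a ∧ y = b ∧ z = b) →
      ¬ (w = a ∧ x = a ∧ y = a ∧ z = b) → ¬ (w = a ∧ x = a ∧ y = b ∧ z = a) →
      r w x y z = c) :
    ∀ i : Fin 4, ∃ x : Fin 4 → D, (∀ j : Fin 4, x j = a ∨ x j = b) ∧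
      (((x i = a ∨ x i = c) ∧ ¬ (r (x 0) (x 1) (x 2) (x 3) = a ∨
          r (x 0) (x 1) (x 2) (x 3) = c)) ∨
       ((x i = b ∨ x i = c) ∧ ¬ (r (x 0) (x 1) (x 2) (x 3) = b ∨
          r (x 0) (x 1) (x 2) (x 3) = c))) :=
  chen_r_not_projective_general a b c hab hac hbc r hr1 hr2 hr3 hr4
end
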